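/- arXiv:2408.02020 — 2 statements merged into one kernel-verified Lean document; each statement's English description precedes it below -/
import Mathlib

section
/- Let A be a finite set of positive integers, let g(n) ≥ 0 for all n ∈ A, let H be a positive integer, and let (α_n)_{n ∈ A} be real numbers. If ∑_{h=1}^{H} |∑_{n ∈ A} g(n) e(h α_n)| < (1/6) ∑_{n ∈ A} g(n), then there exists n ∈ A with ‖α_n‖ < 1/H. -/
open Finset

/-- `e x = exp(2 π i x)`. -/
noncomputable def e (x : ℝ) : ℂ := Complex.exp (2 * Real.pi * Complex.I * x)

/-- `‖x‖`, the distance from the real number `x` to the nearest integer. -/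
noncomputable def nint (x : ℝ) : ℝ := |x - (round x : ℝ)|

/-!
Suppose `‖α_n‖ ≥ 1/H` for all `n ∈ A`, and let `M = ⌈H/2⌉` and `c = cos(π/M) ≥ cos(2πα_n)`. The
trigonometric polynomial `K(θ) = (2 cos 2πθ - 2c) |∑_{i<M} e(iθ)|⁴` has frequencies in `[-H, H]`
and is `≤ 0` at every `α_n`, so `∑_j K̂(j) ∑_n g(n) e(jα_n) = ∑_n g(n) K(α_n) ≤ 0`.
Write `|∑_{i<M} e(iθ)|⁴ = ∑_j J(j) e(jθ)`. Since
`(T + T⁻¹ - 2) (∑_{i<M} Tⁱ)² = T^(2M-1) - 2 T^(M-1) + T⁻¹`, the coefficients of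
`(2 cos 2πθ - 2) |∑_{i<M} e(iθ)|⁴` are combinations of three tent coefficients and lie in
`[-2M, M]`. So `K̂(j) = 2(1 - c) J(j) + O(M)`, and `0 ≤ J(j) ≤ J(0)` together with
`(1 - c) J(0) ≥ 7M/4` give `|K̂(j)| ≤ 3 K̂(0)`. Hence `∑_n g(n) ≤ 6 ∑_{h=1}^H |∑_n g(n) e(hα_n)|`.
`K` is handled as a real Laurent polynomial evaluated at `T = e(θ)`.
-/

open LaurentPolynomial ComplexConjugate

lemma e_int_mul (n : ℤ) (x : ℝ) : e (n * x) = e x ^ n := by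
  simp only [e, ← Complex.exp_int_mul]; push_cast; ring_nf

lemma e_ne_zero (x : ℝ) : e x ≠ 0 := Complex.exp_ne_zero _

lemma conj_e (x : ℝ) : conj (e x) = e (-x) := by
  simp only [e, ← Complex.exp_conj, map_mul, Complex.conj_ofReal, Complex.conj_I, map_ofNat]
  push_cast; ring_nf

lemma e_add_e_neg (x : ℝ) : e x + e (-x) = (2 * Real.cos (2 * Real.pi * x) : ℝ) := by
  rw [← conj_e, Complex.add_conj, e,
    show 2 * (Real.pi : ℂ) * Complex.I * x = (2 * Real.pi * x : ℝ) * Complex.I by push_cast; ring,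
    Complex.exp_ofReal_mul_I_re]

namespace LaurentPolynomial

lemma coeff_T_mul (n : ℤ) (p : ℝ[T;T⁻¹]) (j : ℤ) : (T n * p).coeff j = p.coeff (j - n) := by
  rw [T, AddMonoidAlgebra.coeff_single_mul_apply, one_mul, neg_add_eq_sub]

lemma coeff_C_mul (r : ℝ) (p : ℝ[T;T⁻¹]) (j : ℤ) : (C r * p).coeff j = r * p.coeff j := by
  rw [← single_eq_C, AddMonoidAlgebra.coeff_single_mul_apply, neg_zero, zero_add]

lemma T_mul_T_neg (n : ℤ) : (T n * T (-n) : ℝ[T;T⁻¹]) = 1 := by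
  rw [← T_add, add_neg_cancel, T_zero]

lemma coeff_mul_invert (p q : ℝ[T;T⁻¹]) {S : Finset ℤ} (hS : p.coeff.support ⊆ S) (j : ℤ) :
    (p * invert q).coeff j = ∑ s ∈ S, p.coeff s * q.coeff (s - j) := by
  rw [AddMonoidAlgebra.coeff_mul_apply_left, Finsupp.sum_of_support_subset _ hS _ (by simp)]
  simp only [invert_apply, neg_add, neg_neg, sub_eq_add_neg]

lemma invert_mul_invert_self (p : ℝ[T;T⁻¹]) : invert (p * invert p) = p * invert p := by
  rw [map_mul, involutive_invert p, mul_comm]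

lemma coeff_mul_invert_self_zero_nonneg (p : ℝ[T;T⁻¹]) : 0 ≤ (p * invert p).coeff 0 := by
  rw [coeff_mul_invert p p subset_rfl]
  exact sum_nonneg fun s _ => by rw [sub_zero]; exact mul_self_nonneg _

/-- Apply `coeff_mul_invert_self_zero_nonneg` to `(1 - T j) p`. -/
lemma coeff_mul_invert_self_le (p : ℝ[T;T⁻¹]) (j : ℤ) :
    (p * invert p).coeff j ≤ (p * invert p).coeff 0 := by
  set J := p * invert p
  have hsymm : J.coeff (-j) = J.coeff j := by
    rw [← invert_apply, invert_mul_invert_self]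
  have hexpand : (p - T j * p) * invert (p - T j * p) = C 2 * J - T j * J - T (-j) * J := by
    simp only [J, map_sub, map_mul, invert_T, map_ofNat C]
    linear_combination (p * invert p) * T_mul_T_neg j
  have := coeff_mul_invert_self_zero_nonneg (p - T j * p)
  simp only [hexpand, AddMonoidAlgebra.coeff_sub, Finsupp.sub_apply, coeff_C_mul, coeff_T_mul,
    zero_sub, sub_neg_eq_add, zero_add, hsymm] at this
  linarith

end LaurentPolynomial

noncomputable def evalE (θ : ℝ) : ℝ[T;T⁻¹] →+* ℂ :=
  eval₂ Complex.ofRealHom (Units.mk0 (e θ) (e_ne_zero θ))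

lemma evalE_T (θ : ℝ) (n : ℤ) : evalE θ (T n) = e (n * θ) := by
  rw [evalE, eval₂_T, Units.val_zpow_eq_zpow_val, Units.val_mk0, e_int_mul]

lemma evalE_C (θ r : ℝ) : evalE θ (C r) = r := eval₂_C _ _ _

lemma evalE_invert (θ : ℝ) (p : ℝ[T;T⁻¹]) : evalE θ (invert p) = conj (evalE θ p) := by
  have : (evalE θ).comp (invert (R := ℝ)).toRingHom = (starRingEnd ℂ).comp (evalE θ) := by
    refine AddMonoidAlgebra.ringHom_ext (fun r => ?_) (fun n => ?_)
    · simp [evalE_C]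
    · change evalE θ (invert (T n)) = conj (evalE θ (T n))
      rw [invert_T, evalE_T, evalE_T, conj_e]; push_cast; ring_nf
  exact congr($this p)

lemma evalE_eq_sum (θ : ℝ) (p : ℝ[T;T⁻¹]) {S : Finset ℤ} (hS : p.coeff.support ⊆ S) :
    evalE θ p = ∑ j ∈ S, (p.coeff j : ℂ) * e (j * θ) := by
  conv_lhs => rw [← AddMonoidAlgebra.sum_coeff_single p]
  rw [map_finsuppSum, Finsupp.sum_of_support_subset _ hS _ (by simp)]
  refine sum_congr rfl fun j _ => ?_
  rw [single_eq_C_mul_T, map_mul, evalE_C, evalE_T]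

lemma sum_Icc_neg_erase_zero {M : Type*} [AddCommMonoid M] (f : ℤ → M) (H : ℕ) :
    ∑ j ∈ (Icc (-H : ℤ) H).erase 0, f j = ∑ h ∈ Icc 1 H, (f h + f (-h)) := by
  induction H with
  | zero => simp
  | succ H ih =>
    have hIcc : (Icc (-(H + 1 : ℕ) : ℤ) (H + 1 : ℕ)).erase 0 =
        insert ((H + 1 : ℕ) : ℤ) (insert (-(H + 1 : ℕ) : ℤ) ((Icc (-H : ℤ) H).erase 0)) := by
      ext j; simp only [mem_erase, mem_Icc, mem_insert]; omega
    rw [hIcc, sum_insert (by simp; omega), sum_insert (by simp), ih, sum_Icc_succ_top (by omega)]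
    abel

section ExpSum

variable {ι : Type*} (A : Finset ι) (g α : ι → ℝ)

noncomputable def expSum (j : ℤ) : ℂ := ∑ n ∈ A, (g n : ℂ) * e (j * α n)

lemma expSum_zero : expSum A g α 0 = ∑ n ∈ A, g n := by simp [expSum, e]

lemma norm_expSum_neg (j : ℤ) : ‖expSum A g α (-j)‖ = ‖expSum A g α j‖ := by
  rw [← Complex.norm_conj, expSum, expSum, map_sum]
  congr 1
  refine sum_congr rfl fun n _ => ?_
  rw [map_mul, Complex.conj_ofReal, conj_e]
  push_cast; ring_nf

lemma sum_mul_evalE (K : ℝ[T;T⁻¹]) {S : Finset ℤ} (hS : K.coeff.support ⊆ S) :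
    ∑ n ∈ A, (g n : ℂ) * evalE (α n) K = ∑ j ∈ S, (K.coeff j : ℂ) * expSum A g α j := by
  simp_rw [expSum, evalE_eq_sum _ K hS, mul_sum]
  rw [sum_comm]
  exact sum_congr rfl fun n _ => sum_congr rfl fun j _ => by ring

theorem coeff_zero_mul_sum_le_of_evalE_re_nonpos (hg : ∀ n ∈ A, 0 ≤ g n) (K : ℝ[T;T⁻¹])
    (H : ℕ) (hK : K.coeff.support ⊆ Icc (-H : ℤ) H) (B : ℝ) (hB : ∀ j ≠ 0, |K.coeff j| ≤ B)
    (hneg : ∀ n ∈ A, (evalE (α n) K).re ≤ 0) :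
    K.coeff 0 * ∑ n ∈ A, g n ≤ 2 * B * ∑ h ∈ Icc 1 H, ‖expSum A g α h‖ := by
  have hre : ∑ j ∈ Icc (-H : ℤ) H, K.coeff j * (expSum A g α j).re ≤ 0 := by
    have := congr_arg Complex.re (sum_mul_evalE A g α K hK)
    simp only [Complex.re_sum, Complex.re_ofReal_mul] at this
    rw [← this]
    exact sum_nonpos fun n hn => mul_nonpos_of_nonneg_of_nonpos (hg n hn) (hneg n hn)
  have hterm : ∀ j ∈ (Icc (-H : ℤ) H).erase 0,
      -(B * ‖expSum A g α j‖) ≤ K.coeff j * (expSum A g α j).re := by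
    intro j hj
    have hBj := hB j (ne_of_mem_erase hj)
    calc -(B * ‖expSum A g α j‖) ≤ -(|K.coeff j| * |(expSum A g α j).re|) :=
          neg_le_neg (mul_le_mul hBj (Complex.abs_re_le_norm _) (abs_nonneg _)
            ((abs_nonneg _).trans hBj))
      _ = -|K.coeff j * (expSum A g α j).re| := by rw [abs_mul]
      _ ≤ _ := neg_abs_le _
  have hsymm := sum_Icc_neg_erase_zero (fun j => ‖expSum A g α j‖) H
  simp only [norm_expSum_neg, ← two_mul, ← mul_sum] at hsymm
  rw [← add_sum_erase _ _ (by simp : (0 : ℤ) ∈ Icc (-H : ℤ) H), expSum_zero,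
    Complex.ofReal_re] at hre
  have := sum_le_sum hterm
  rw [sum_neg_distrib, ← mul_sum, hsymm] at this
  linarith

end ExpSum

section Kernel

noncomputable def blockSum (M : ℕ) : ℝ[T;T⁻¹] := ∑ i ∈ range M, T i

noncomputable def tent (M : ℕ) : ℝ[T;T⁻¹] := blockSum M ^ 2

noncomputable def jackson (M : ℕ) : ℝ[T;T⁻¹] := tent M * invert (tent M)

noncomputable def minorantKernel (M : ℕ) (c : ℝ) : ℝ[T;T⁻¹] :=
  (T 1 + T (-1) - C (2 * c)) * jackson M

variable (M : ℕ) (c : ℝ)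

lemma coeff_blockSum (t : ℤ) : (blockSum M).coeff t = if 0 ≤ t ∧ t < M then 1 else 0 := by
  simp only [blockSum, AddMonoidAlgebra.coeff_sum, Finsupp.finsetSum_apply, T_apply]
  split_ifs with h
  · lift t to ℕ using h.1
    simp only [Nat.cast_inj]
    exact sum_ite_eq_of_mem' _ _ _ (mem_range.2 (by exact_mod_cast h.2))
  · exact sum_eq_zero fun i hi => if_neg (by have := mem_range.1 hi; omega)

lemma blockSum_mul_T_one_sub_one : blockSum M * (T 1 - 1) = T M - 1 := by
  have : blockSum M = ∑ i ∈ range M, T 1 ^ i := by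
    simp only [blockSum, T_pow, mul_one]
  rw [this, geom_sum_mul, T_pow, mul_one]

lemma evalE_blockSum_zero : evalE 0 (blockSum M) = M := by
  simp [blockSum, evalE_T, e]

lemma coeff_tent (s : ℤ) :
    (tent M).coeff s = ∑ a ∈ range M, if 0 ≤ s - a ∧ s - a < M then 1 else 0 := by
  nth_rw 1 [tent, sq, blockSum]
  simp only [sum_mul, AddMonoidAlgebra.coeff_sum, Finsupp.finsetSum_apply, coeff_T_mul,
    coeff_blockSum]

lemma tent_coeff_nonneg (s : ℤ) : 0 ≤ (tent M).coeff s := by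
  rw [coeff_tent]; positivity

lemma tent_coeff_le (s : ℤ) : (tent M).coeff s ≤ M := by
  rw [coeff_tent]
  calc _ ≤ ∑ _a ∈ range M, (1 : ℝ) := sum_le_sum fun a _ => by split_ifs <;> norm_num
    _ = M := by simp

lemma tent_coeff_mid : (tent M).coeff (M - 1) = M := by
  rw [coeff_tent, sum_congr rfl fun a ha => if_pos (by have := mem_range.1 ha; omega)]
  simp

lemma tent_coeff_eq_zero {s : ℤ} (hs : s < 0 ∨ 2 * M - 2 < s) : (tent M).coeff s = 0 := by
  rw [coeff_tent]
  exact sum_eq_zero fun a ha => if_neg (by have := mem_range.1 ha; omega)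

lemma support_tent : (tent M).coeff.support ⊆ Icc 0 (2 * M - 2) := by
  intro s hs
  rw [mem_Icc]
  by_contra h
  exact Finsupp.mem_support_iff.1 hs (tent_coeff_eq_zero M (by omega))

lemma sum_tent_coeff : ∑ s ∈ Icc (0 : ℤ) (2 * M - 2), (tent M).coeff s = (M : ℝ) ^ 2 := by
  have := evalE_eq_sum 0 (tent M) (support_tent M)
  rw [tent, map_pow, evalE_blockSum_zero] at this
  simp only [mul_zero, e, Complex.ofReal_zero, mul_one, Complex.exp_zero] at this
  exact_mod_cast this.symm

/-- `T + T⁻¹ - 2 = T⁻¹ (T - 1)²` and `(T - 1) ∑_{i<M} Tⁱ = T^M - 1`. -/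
lemma tent_second_difference :
    (T 1 + T (-1) - C 2) * tent M = T (2 * M - 1) - C 2 * T (M - 1) + T (-1) := by
  have h2 : (T (2 * M - 1) : ℝ[T;T⁻¹]) = T (-1) * T M * T M := by
    rw [← T_add, ← T_add]; ring_nf
  have h3 : (T (M - 1) : ℝ[T;T⁻¹]) = T (-1) * T M := by rw [← T_add]; ring_nf
  rw [tent, h2, h3, map_ofNat C]
  linear_combination (2 - T 1) * blockSum M ^ 2 * T_mul_T_neg 1 +
    T (-1) * (blockSum M * (T 1 - 1) + T M - 1) * blockSum_mul_T_one_sub_one M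

lemma coeff_jackson (j : ℤ) : (jackson M).coeff j =
    ∑ s ∈ Icc (0 : ℤ) (2 * M - 2), (tent M).coeff s * (tent M).coeff (s - j) :=
  coeff_mul_invert _ _ (support_tent M) j

lemma jackson_coeff_nonneg (j : ℤ) : 0 ≤ (jackson M).coeff j := by
  rw [coeff_jackson]
  exact sum_nonneg fun s _ => mul_nonneg (tent_coeff_nonneg M s) (tent_coeff_nonneg M _)

lemma jackson_coeff_eq_zero {j : ℤ} (hj : 2 * M - 1 ≤ |j|) : (jackson M).coeff j = 0 := by
  rw [coeff_jackson]
  refine sum_eq_zero fun s hs => ?_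
  rw [mem_Icc] at hs
  rw [tent_coeff_eq_zero M (s := s - j) (by cases abs_cases j <;> omega), mul_zero]

lemma jackson_coeff_le (j : ℤ) : (jackson M).coeff j ≤ (jackson M).coeff 0 :=
  coeff_mul_invert_self_le _ j

lemma pow_four_le_jackson_coeff_zero : (M : ℝ) ^ 4 ≤ (2 * M - 1) * (jackson M).coeff 0 := by
  have hCS := sq_sum_le_card_mul_sum_sq (s := Icc (0 : ℤ) (2 * M - 2)) (f := (tent M).coeff)
  rw [sum_tent_coeff, Int.card_Icc] at hCS
  simp only [coeff_jackson, sub_zero, ← sq]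
  rcases Nat.eq_zero_or_pos M with rfl | hM
  · simp
  · have hcard : (((2 * M - 2 : ℤ) + 1 - 0).toNat : ℝ) = 2 * M - 1 := by
      rw [show (2 * M - 2 : ℤ) + 1 - 0 = ((2 * M - 1 : ℕ) : ℤ) by omega, Int.toNat_natCast,
        Nat.cast_sub (by omega)]
      push_cast; ring
    rw [hcard] at hCS
    linarith

lemma minorantKernel_eq : minorantKernel M c = C (2 * (1 - c)) * jackson M +
    (T (2 * M - 1) - C 2 * T (M - 1) + T (-1)) * invert (tent M) := by
  rw [← tent_second_difference, minorantKernel, jackson]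
  simp only [map_mul, map_sub, map_one, map_ofNat C]
  ring

lemma coeff_minorantKernel (j : ℤ) : (minorantKernel M c).coeff j =
    2 * (1 - c) * (jackson M).coeff j + ((tent M).coeff (2 * M - 1 - j) -
      2 * (tent M).coeff (M - 1 - j) + (tent M).coeff (-1 - j)) := by
  rw [minorantKernel_eq]
  simp only [AddMonoidAlgebra.coeff_add, AddMonoidAlgebra.coeff_sub, Finsupp.add_apply,
    Finsupp.sub_apply, add_mul, sub_mul, mul_assoc, coeff_C_mul, coeff_T_mul, invert_apply,
    neg_sub]

lemma minorantKernel_coeff_zero :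
    (minorantKernel M c).coeff 0 = 2 * (1 - c) * (jackson M).coeff 0 - 2 * M := by
  rw [coeff_minorantKernel, tent_coeff_eq_zero M (s := 2 * M - 1 - 0) (by omega),
    tent_coeff_eq_zero M (s := -1 - 0) (by omega), sub_zero, tent_coeff_mid]
  ring

lemma minorantKernel_coeff_sub_mem_Icc (j : ℤ) :
    (minorantKernel M c).coeff j - 2 * (1 - c) * (jackson M).coeff j ∈
      Set.Icc (-2 * M : ℝ) M := by
  rw [coeff_minorantKernel, add_sub_cancel_left]
  have h0 := tent_coeff_nonneg M (2 * M - 1 - j)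
  have h1 := tent_coeff_nonneg M (-1 - j)
  have h2 := tent_coeff_nonneg M (M - 1 - j)
  have h3 := tent_coeff_le M (M - 1 - j)
  refine ⟨by linarith, ?_⟩
  rcases le_or_gt 0 j with hj | hj
  · rw [tent_coeff_eq_zero M (s := -1 - j) (by omega)]
    linarith [tent_coeff_le M (2 * M - 1 - j)]
  · rw [tent_coeff_eq_zero M (s := 2 * M - 1 - j) (by omega)]
    linarith [tent_coeff_le M (-1 - j)]

lemma support_minorantKernel :
    (minorantKernel M c).coeff.support ⊆ Icc (-(2 * M - 1)) (2 * M - 1) := by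
  intro j hj
  rw [mem_Icc]
  by_contra h
  refine Finsupp.mem_support_iff.1 hj ?_
  rw [coeff_minorantKernel, jackson_coeff_eq_zero M (by cases abs_cases j <;> omega),
    tent_coeff_eq_zero M (s := 2 * M - 1 - j) (by omega),
    tent_coeff_eq_zero M (s := M - 1 - j) (by omega),
    tent_coeff_eq_zero M (s := -1 - j) (by omega)]
  ring

lemma abs_minorantKernel_coeff_le (hc : c ≤ 1)
    (hJ : 7 * M ≤ 4 * ((1 - c) * (jackson M).coeff 0)) (j : ℤ) :
    |(minorantKernel M c).coeff j| ≤ 3 * (minorantKernel M c).coeff 0 := by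
  obtain ⟨hlo, hhi⟩ := minorantKernel_coeff_sub_mem_Icc M c j
  have hJj := mul_le_mul_of_nonneg_left (jackson_coeff_le M j) (by linarith : 0 ≤ 2 * (1 - c))
  have hJ0 := mul_nonneg (by linarith : 0 ≤ 2 * (1 - c)) (jackson_coeff_nonneg M j)
  rw [minorantKernel_coeff_zero, abs_le]
  constructor <;> linarith

lemma evalE_minorantKernel (θ : ℝ) : evalE θ (minorantKernel M c) =
    ((2 * Real.cos (2 * Real.pi * θ) - 2 * c) * Complex.normSq (evalE θ (tent M)) : ℝ) := by
  simp only [minorantKernel, jackson, map_mul, map_sub, map_add, evalE_invert, Complex.mul_conj,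
    evalE_T, evalE_C, Int.cast_one, Int.cast_neg, one_mul, neg_one_mul, e_add_e_neg]
  push_cast; ring

lemma evalE_minorantKernel_re_nonpos {θ : ℝ} (hθ : Real.cos (2 * Real.pi * θ) ≤ c) :
    (evalE θ (minorantKernel M c)).re ≤ 0 := by
  rw [evalE_minorantKernel, Complex.ofReal_re]
  exact mul_nonpos_of_nonpos_of_nonneg (by linarith) (Complex.normSq_nonneg _)

end Kernel

section Estimates

open Real

lemma cos_two_pi_le_of_le_nint {θ δ : ℝ} (hδ : 0 ≤ δ) (h : δ ≤ nint θ) :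
    cos (2 * π * θ) ≤ cos (2 * π * δ) := by
  have hcos : cos (2 * π * θ) = cos (2 * π * nint θ) := by
    rw [nint, show 2 * π * θ = 2 * π * (θ - round θ) + (round θ : ℤ) * (2 * π) by ring,
      cos_add_int_mul_two_pi, ← cos_abs, abs_mul, abs_of_pos (by positivity : 0 < 2 * π)]
  have hhalf : nint θ ≤ 1 / 2 := abs_sub_round θ
  rw [hcos]
  exact cos_le_cos_of_nonneg_of_le_pi (by positivity) (by nlinarith [pi_pos]) (by gcongr)

lemma seven_mul_le_one_sub_cos_pi_div (M : ℕ) (hM : 1 ≤ M) :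
    7 * (2 * M - 1) ≤ 4 * (1 - cos (π / M)) * M ^ 3 := by
  rcases hM.eq_or_lt with rfl | hM2
  · norm_num
  set z := π / (2 * M) with hz
  have hMr : (2 : ℝ) ≤ M := by exact_mod_cast hM2
  have hzM : z ^ 2 * M ^ 2 = π ^ 2 / 4 := by rw [hz]; field_simp; ring
  have hcos : 1 - cos (π / M) = 2 * sin z ^ 2 := by
    rw [show π / M = 2 * z by rw [hz]; field_simp, cos_two_mul, cos_sq']; ring
  have hz0 : 0 < z := by positivity
  have hz4 : z ≤ π / 4 := by
    rw [hz, div_le_div_iff₀ (by positivity) (by norm_num)]; nlinarith [pi_pos]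
  have hpi := pi_gt_d2
  have hpi' := pi_lt_d2
  have hsin : z * (1 - π ^ 2 / 96) ≤ sin z := by
    nlinarith [sin_ge_sub_cube hz0.le, mul_le_mul hz4 hz4 hz0.le (by positivity)]
  have hk : (0.89 : ℝ) ≤ 1 - π ^ 2 / 96 := by nlinarith
  have hsq : (z * 0.89) ^ 2 ≤ sin z ^ 2 := by
    gcongr
    nlinarith
  have hpi2 : 9.8 < π ^ 2 := by nlinarith
  calc 7 * (2 * (M : ℝ) - 1) ≤ 0.89 ^ 2 * 2 * π ^ 2 * M := by nlinarith
    _ = 8 * (z * 0.89) ^ 2 * M ^ 3 := by linear_combination (-8 * 0.89 ^ 2 * M) * hzM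
    _ ≤ 4 * (1 - cos (π / M)) * M ^ 3 := by
      rw [hcos]; nlinarith [mul_le_mul_of_nonneg_right hsq (by positivity : (0 : ℝ) ≤ M ^ 3)]

lemma seven_mul_le_jackson_coeff_zero (M : ℕ) (hM : 1 ≤ M) :
    7 * M ≤ 4 * ((1 - cos (π / M)) * (jackson M).coeff 0) := by
  have h1 := seven_mul_le_one_sub_cos_pi_div M hM
  have h2 := pow_four_le_jackson_coeff_zero M
  have hc : 0 ≤ 1 - cos (π / M) := by linarith [cos_le_one (π / M)]
  have hM' : (1 : ℝ) ≤ M := by exact_mod_cast hM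
  nlinarith [mul_le_mul_of_nonneg_left h2 hc]

end Estimates

theorem small_fractional_part_from_exponential_sums_general
    (A : Finset ℕ) (g : ℕ → ℝ) (hg : ∀ n ∈ A, 0 ≤ g n)
    (H : ℕ) (hH : 0 < H) (α : ℕ → ℝ)
    (hsum : ∑ h ∈ Finset.Icc 1 H, ‖∑ n ∈ A, (g n : ℂ) * e ((h : ℝ) * α n)‖ <
      (1 / 6) * ∑ n ∈ A, g n) :
    ∃ n ∈ A, nint (α n) < 1 / (H : ℝ) := by
  by_contra! hfar
  set M := (H + 1) / 2
  have hM : 1 ≤ M := by omega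
  set K := minorantKernel M (Real.cos (Real.pi / M))
  have hK0 : 0 < K.coeff 0 := by
    have := seven_mul_le_jackson_coeff_zero M hM
    have hM' : (1 : ℝ) ≤ M := by exact_mod_cast hM
    rw [minorantKernel_coeff_zero]
    linarith
  have hδ : 1 / (2 * M : ℝ) ≤ 1 / H :=
    one_div_le_one_div_of_le (by exact_mod_cast hH) (by exact_mod_cast (by omega : H ≤ 2 * M))
  have hneg : ∀ n ∈ A, (evalE (α n) K).re ≤ 0 := by
    intro n hn
    have := cos_two_pi_le_of_le_nint (by positivity) (hδ.trans (hfar n hn))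
    rw [show 2 * Real.pi * (1 / (2 * M)) = Real.pi / M by field_simp] at this
    exact evalE_minorantKernel_re_nonpos M _ this
  have hsupp : K.coeff.support ⊆ Icc (-H : ℤ) H :=
    (support_minorantKernel M _).trans (Icc_subset_Icc (by omega) (by omega))
  have key := coeff_zero_mul_sum_le_of_evalE_re_nonpos A g α hg K H hsupp (3 * K.coeff 0)
    (fun j _ => abs_minorantKernel_coeff_le M _ (Real.cos_le_one _)
      (seven_mul_le_jackson_coeff_zero M hM) j) hneg
  simp only [expSum, Int.cast_natCast] at key
  nlinarith

theorem small_fractional_part_from_exponential_sums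
    (A : Finset ℕ) (hA : ∀ n ∈ A, 0 < n) (g : ℕ → ℝ) (hg : ∀ n ∈ A, 0 ≤ g n)
    (H : ℕ) (hH : 0 < H) (α : ℕ → ℝ)
    (hsum : ∑ h ∈ Finset.Icc 1 H, ‖∑ n ∈ A, (g n : ℂ) * e ((h : ℝ) * α n)‖ <
      (1 / 6) * ∑ n ∈ A, g n) :
    ∃ n ∈ A, nint (α n) < 1 / (H : ℝ) :=
  small_fractional_part_from_exponential_sums_general A g hg H hH α hsum
end

section
/- Let a, b, c be arithmetical functions with a = b * c (Dirichlet convolution), where b(1) ≠ 0 and b^{-1} denotes the Dirichlet inverse of b. Then for any real numbers U, V ≥ 1 and every positive integer n: a(n) = a(n)·1_{[1,U]}(n) + ∑_{lm = n, l ≤ V} b(l) c(m) − ∑_{lm = n, l ≤ UV} (∑_{rs = l, r ≤ V, s ≤ U} a(s) b(r)) b^{-1}(m) − ∑_{lm = n, l > U, m > V} a(l) ∑_{r | m, r ≤ V} b(r) b^{-1}(m/r). -/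
open Finset

/-- Dirichlet convolution of two arithmetical functions. -/
def dconv (f g : ℕ → ℝ) : ℕ → ℝ := fun n => ∑ d ∈ n.divisors, f d * g (n / d)

/-- The arithmetic function associated to `f : ℕ → ℝ`. -/
def toAF (f : ℕ → ℝ) : ArithmeticFunction ℝ := ⟨fun n => if n = 0 then 0 else f n, by simp⟩

lemma toAF_apply (f : ℕ → ℝ) {n : ℕ} (hn : n ≠ 0) : toAF f n = f n := if_neg hn

lemma dconv_eq (f g : ℕ → ℝ) (n : ℕ) : dconv f g n = (toAF f * toAF g) n := by
  rcases eq_or_ne n 0 with rfl | hn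
  · simp [dconv]
  · rw [ArithmeticFunction.mul_apply, dconv,
      Nat.sum_divisorsAntidiagonal (f := fun x y => toAF f x * toAF g y)]
    refine Finset.sum_congr rfl fun d hd => ?_
    obtain ⟨hdvd, -⟩ := Nat.mem_divisors.mp hd
    have hd0 : d ≠ 0 := by rintro rfl; exact hn (Nat.eq_zero_of_zero_dvd hdvd)
    have hnd0 : n / d ≠ 0 :=
      (Nat.div_pos (Nat.le_of_dvd (Nat.pos_of_ne_zero hn) hdvd) (Nat.pos_of_ne_zero hd0)).ne' 
    rw [toAF_apply f hd0, toAF_apply g hnd0]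

lemma AF_sub_apply (f g : ArithmeticFunction ℝ) (n : ℕ) : (f - g) n = f n - g n := by
  rw [sub_eq_add_neg, ArithmeticFunction.add_apply, sub_eq_add_neg]
  rfl

theorem vaughan_like_identity
    (a b c binv : ℕ → ℝ) (hb : b 1 ≠ 0)
    (habc : ∀ n, a n = dconv b c n)
    (hinv : ∀ n, dconv b binv n = if n = 1 then 1 else 0)
    (U V : ℝ) (hU : 1 ≤ U) (hV : 1 ≤ V) (n : ℕ) (hn : 0 < n) :
    a n = (if (n : ℝ) ≤ U then a n else 0)
      + (∑ p ∈ n.divisorsAntidiagonal,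
          if ((p.1 : ℝ) ≤ V) then b p.1 * c p.2 else 0)
      - (∑ p ∈ n.divisorsAntidiagonal,
          if ((p.1 : ℝ) ≤ U * V) then
            (∑ t ∈ (p.1).divisorsAntidiagonal,
              if ((t.1 : ℝ) ≤ V ∧ (t.2 : ℝ) ≤ U) then a t.2 * b t.1 else 0) * binv p.2
          else 0)
      - (∑ p ∈ n.divisorsAntidiagonal,
          if (U < (p.1 : ℝ) ∧ V < (p.2 : ℝ)) then
            a p.1 * ∑ r ∈ (p.2).divisors,
              (if ((r : ℝ) ≤ V) then b r * binv (p.2 / r) else 0)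
          else 0) := by
  set a' : ℕ → ℝ := fun l => if (l : ℝ) ≤ U then a l else 0 with ha'
  set a'' : ℕ → ℝ := fun l => if U < (l : ℝ) then a l else 0 with ha''
  set b' : ℕ → ℝ := fun r => if (r : ℝ) ≤ V then b r else 0 with hb'
  set A := toAF a
  set A' := toAF a'
  set A'' := toAF a''
  set B := toAF b
  set B' := toAF b'
  set C := toAF c
  set BI := toAF binv
  have hn0 : n ≠ 0 := hn.ne'
  -- basic facts
  have hAsum : A' + A'' = A := by
    ext m
    rw [ArithmeticFunction.add_apply]
    rcases eq_or_ne m 0 with rfl | hm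
    · simp [A, A', A'', toAF]
    · rw [toAF_apply _ hm, toAF_apply _ hm, toAF_apply _ hm, ha', ha'']
      by_cases h : (m : ℝ) ≤ U
      · simp [h, not_lt.mpr h]
      · simp [h, not_le.mp h]
  have hBC : A = B * C := by
    ext m
    rcases eq_or_ne m 0 with rfl | hm
    · simp [A, toAF]
    · rw [toAF_apply _ hm, habc m, dconv_eq]
  have hBBI : B * BI = 1 := by
    ext m
    rcases eq_or_ne m 0 with rfl | hm
    · simp
    · rw [← dconv_eq, hinv m, ArithmeticFunction.one_apply]
  -- b' agrees with b up to V, so b' * binv = δ below V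
  have hB'BI_small : ∀ m : ℕ, m ≠ 0 → (m : ℝ) ≤ V →
      (B' * BI) m = if m = 1 then (1 : ℝ) else 0 := by
    intro m hm hmV
    rw [← dconv_eq, ← hinv m, dconv, dconv]
    refine Finset.sum_congr rfl fun r hr => ?_
    obtain ⟨hdvd, -⟩ := Nat.mem_divisors.mp hr
    have : (r : ℝ) ≤ V := le_trans (Nat.cast_le.mpr (Nat.le_of_dvd (Nat.pos_of_ne_zero hm) hdvd)) hmV
    rw [hb']
    simp [this]
  -- identify the four terms
  have hT1 : (if (n : ℝ) ≤ U then a n else 0) = A' n := by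
    rw [toAF_apply _ hn0]
  have hT2 : (∑ p ∈ n.divisorsAntidiagonal,
      if ((p.1 : ℝ) ≤ V) then b p.1 * c p.2 else 0) = (B' * C) n := by
    rw [ArithmeticFunction.mul_apply]
    refine Finset.sum_congr rfl fun p hp => ?_
    obtain ⟨hpeq, -⟩ := Nat.mem_divisorsAntidiagonal.mp hp
    have hp1 : p.1 ≠ 0 := by rintro h; exact hn0 (by rw [← hpeq, h, zero_mul])
    have hp2 : p.2 ≠ 0 := by rintro h; exact hn0 (by rw [← hpeq, h, mul_zero])
    rw [toAF_apply _ hp1, toAF_apply _ hp2, hb', ite_mul, zero_mul]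
  have hinnerT3 : ∀ l : ℕ, l ≠ 0 →
      (∑ t ∈ l.divisorsAntidiagonal,
        if ((t.1 : ℝ) ≤ V ∧ (t.2 : ℝ) ≤ U) then a t.2 * b t.1 else 0) = (B' * A') l := by
    intro l hl
    rw [ArithmeticFunction.mul_apply]
    refine Finset.sum_congr rfl fun t ht => ?_
    obtain ⟨hteq, -⟩ := Nat.mem_divisorsAntidiagonal.mp ht
    have ht1 : t.1 ≠ 0 := by rintro h; exact hl (by rw [← hteq, h, zero_mul])
    have ht2 : t.2 ≠ 0 := by rintro h; exact hl (by rw [← hteq, h, mul_zero])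
    rw [toAF_apply _ ht1, toAF_apply _ ht2, hb', ha']
    by_cases h1 : (t.1 : ℝ) ≤ V <;> by_cases h2 : (t.2 : ℝ) ≤ U <;>
      simp [h1, h2, mul_comm]
  have hT3 : (∑ p ∈ n.divisorsAntidiagonal,
      if ((p.1 : ℝ) ≤ U * V) then
        (∑ t ∈ (p.1).divisorsAntidiagonal,
          if ((t.1 : ℝ) ≤ V ∧ (t.2 : ℝ) ≤ U) then a t.2 * b t.1 else 0) * binv p.2
      else 0) = ((B' * A') * BI) n := by
    rw [ArithmeticFunction.mul_apply]
    refine Finset.sum_congr rfl fun p hp => ?_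
    obtain ⟨hpeq, -⟩ := Nat.mem_divisorsAntidiagonal.mp hp
    have hp1 : p.1 ≠ 0 := by rintro h; exact hn0 (by rw [← hpeq, h, zero_mul])
    have hp2 : p.2 ≠ 0 := by rintro h; exact hn0 (by rw [← hpeq, h, mul_zero])
    rw [toAF_apply binv hp2]
    by_cases hUV : (p.1 : ℝ) ≤ U * V
    · rw [if_pos hUV, hinnerT3 p.1 hp1]
    · rw [if_neg hUV]
      have : (B' * A') p.1 = 0 := by
        rw [← hinnerT3 p.1 hp1]
        refine Finset.sum_eq_zero fun t ht => ?_
        obtain ⟨hteq, -⟩ := Nat.mem_divisorsAntidiagonal.mp ht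
        rw [if_neg]
        rintro ⟨h1, h2⟩
        apply hUV
        have : (p.1 : ℝ) = (t.1 : ℝ) * (t.2 : ℝ) := by
          rw [← Nat.cast_mul, hteq]
        rw [this, mul_comm U V]
        exact mul_le_mul h1 h2 (by positivity) (le_trans zero_le_one hV)
      rw [this, zero_mul]
  have hT4 : (∑ p ∈ n.divisorsAntidiagonal,
      if (U < (p.1 : ℝ) ∧ V < (p.2 : ℝ)) then
        a p.1 * ∑ r ∈ (p.2).divisors,
          (if ((r : ℝ) ≤ V) then b r * binv (p.2 / r) else 0)
      else 0) = (A'' * (B' * BI - 1)) n := by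
    rw [ArithmeticFunction.mul_apply]
    refine Finset.sum_congr rfl fun p hp => ?_
    obtain ⟨hpeq, -⟩ := Nat.mem_divisorsAntidiagonal.mp hp
    have hp1 : p.1 ≠ 0 := by rintro h; exact hn0 (by rw [← hpeq, h, zero_mul])
    have hp2 : p.2 ≠ 0 := by rintro h; exact hn0 (by rw [← hpeq, h, mul_zero])
    have hinner : (∑ r ∈ (p.2).divisors,
        (if ((r : ℝ) ≤ V) then b r * binv (p.2 / r) else 0)) = (B' * BI) p.2 := by
      rw [← dconv_eq, dconv]
      refine Finset.sum_congr rfl fun r hr => ?_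
      rw [hb', ite_mul, zero_mul]
    rw [toAF_apply _ hp1, ha'', AF_sub_apply, ArithmeticFunction.one_apply]
    beta_reduce
    by_cases h1 : U < (p.1 : ℝ)
    · by_cases h2 : V < (p.2 : ℝ)
      · rw [if_pos ⟨h1, h2⟩, if_pos h1, hinner]
        have hp2ne1 : p.2 ≠ 1 := by
          rintro h
          rw [h, Nat.cast_one] at h2
          exact absurd hV (not_le.mpr h2)
        rw [if_neg hp2ne1, sub_zero]
      · rw [if_neg (by tauto), hB'BI_small p.2 hp2 (not_lt.mp h2), sub_self, mul_zero]
    · rw [if_neg (by tauto), if_neg h1, zero_mul]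
  rw [hT1, hT2, hT3, hT4]
  -- now a ring identity among arithmetic functions
  have hABI : A * BI = C := by
    rw [hBC, mul_comm B C, mul_assoc, hBBI, mul_one]
  have key : A' + B' * C - (B' * A') * BI - A'' * (B' * BI - 1) = A := by
    have e1 : A' + B' * C - (B' * A') * BI - A'' * (B' * BI - 1)
        = (A' + A'') + B' * C - ((A' + A'') * BI) * B' := by ring
    rw [e1, hAsum, hABI]
    ring
  rw [show a n = A n from (toAF_apply a hn0).symm, ← key, AF_sub_apply, AF_sub_apply,
    ArithmeticFunction.add_apply]
end
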